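/- arXiv:2010.06201 — 8 statements merged into one kernel-verified Lean document; each statement's English description precedes it below -/
import Mathlib

section
/- For all real numbers a > 0 and b > 0 and every y in the open interval (0,1) with y ≠ a/(a+b), the strict inequality a·log y + b·log(1−y) < a·log(a/(a+b)) + b·log(b/(a+b)) holds; hence y = a/(a+b) is the unique maximizer of y ↦ a·log y + b·log(1−y) on (0,1). -/
/-! Both terms are bounded through the tangent line `log t ≤ t - 1` at `t = 1`, applied to
`y / p` and `(1 - y) / q` with `p = a / (a + b)`, `q = b / (a + b)`. The weighted linear bounds
`a (y / p - 1) + b ((1 - y) / q - 1)` cancel to `0`, and the first one is strict since `y ≠ p`. -/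

open Real

lemma Real.log_sub_log_le_div_sub_one {p y : ℝ} (hp : 0 < p) (hy : 0 < y) :
    log y - log p ≤ y / p - 1 := by
  rw [← log_div hy.ne' hp.ne']
  exact log_le_sub_one_of_pos (div_pos hy hp)

lemma Real.log_sub_log_lt_div_sub_one {p y : ℝ} (hp : 0 < p) (hy : 0 < y) (hne : y ≠ p) :
    log y - log p < y / p - 1 := by
  rw [← log_div hy.ne' hp.ne']
  exact log_lt_sub_one_of_pos (div_pos hy hp) (by rwa [Ne, div_eq_one_iff_eq hp.ne'])

/-- For all real numbers `a > 0`, `b > 0` and every `y ∈ (0,1)` with `y ≠ a/(a+b)`,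
`a·log y + b·log (1−y) < a·log (a/(a+b)) + b·log (b/(a+b))`; hence `y = a/(a+b)` is the
unique maximizer of `y ↦ a·log y + b·log (1−y)` on `(0,1)`. -/
theorem gan_pointwise_optimal_discriminator_lt
    (a b y : ℝ) (ha : 0 < a) (hb : 0 < b) (hy : y ∈ Set.Ioo (0 : ℝ) 1)
    (hne : y ≠ a / (a + b)) :
    a * Real.log y + b * Real.log (1 - y) <
      a * Real.log (a / (a + b)) + b * Real.log (b / (a + b)) := by
  obtain ⟨hy0, hy1⟩ := hy
  have hab : 0 < a + b := add_pos ha hb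
  have hp : 0 < a / (a + b) := div_pos ha hab
  have hq : 0 < b / (a + b) := div_pos hb hab
  have bound_y := mul_lt_mul_of_pos_left (log_sub_log_lt_div_sub_one hp hy0 hne) ha
  have bound_one_sub_y :=
    mul_le_mul_of_nonneg_left (log_sub_log_le_div_sub_one hq (sub_pos.2 hy1)) hb.le
  have cancel :
      a * (y / (a / (a + b)) - 1) + b * ((1 - y) / (b / (a + b)) - 1) = 0 := by
    field_simp
    ring
  linarith
end

section
/- (Optimal discriminator, Theorem 1 of the paper.) Let Z and X be measurable spaces, ζ a probability measure on Z (the latent distribution), G : Z → X a measurable map (the generator), μ a probability measure on X (the data distribution), and ν = G_*ζ the pushforward of ζ under G (the generated distribution). Assume μ ≪ λ and ν ≪ λ for a σ-finite measure λ on X, with densities f = dμ/dλ and g = dν/dλ. Let D* : X → ℝ be defined by D*(x) = f(x)/(f(x)+g(x)) when f(x)+g(x) > 0 and D*(x) = 1/2 otherwise. Then for every measurable D : X → ℝ with 0 < D(x) < 1 for all x, such that the functions f·log D, g·log(1−D), f·log D*, and g·log(1−D*) are all λ-integrable, one has ∫ f·log D dλ + ∫ g·log(1−D) dλ ≤ ∫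 f·log D* dλ + ∫ g·log(1−D*) dλ. -/
/-!
The objective is the integral of `f x * log (D x) + g x * log (1 - D x)`, so it suffices to
maximize `t ↦ a * log t + b * log (1 - t)` over `t ∈ (0, 1)` for each pair `a, b ≥ 0`.
With `s = a + b`, the tangent-line bound `log u ≤ u - 1` gives
`a * log t - s * t ≤ a * log (a / s) - a`, and adding it to the same bound for `b` and `1 - t`
shows that the maximum is attained at `t = a / s`.
-/

open MeasureTheory Real

lemma mul_log_sub_mul_le {a s t : ℝ} (ha : 0 ≤ a) (hs : 0 < s) (ht : 0 < t) :
    a * log t - s * t ≤ a * log (a / s) - a := by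
  rcases ha.eq_or_lt with rfl | ha
  · simpa using (mul_pos hs ht).le
  have hlog : log t = log (a / s) + log (s * t / a) := by
    rw [← log_mul (by positivity) (by positivity)]
    field_simp
  have hle : a * log (s * t / a) ≤ s * t - a := by
    calc a * log (s * t / a) ≤ a * (s * t / a - 1) :=
          mul_le_mul_of_nonneg_left (log_le_sub_one_of_pos (by positivity)) ha.le
      _ = s * t - a := by field_simp
  rw [hlog]
  linarith

lemma mul_log_add_mul_log_one_sub_le {a b t : ℝ} (ha : 0 ≤ a) (hb : 0 ≤ b) (ht₀ : 0 < t)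
    (ht₁ : t < 1) :
    a * log t + b * log (1 - t) ≤ a * log (a / (a + b)) + b * log (b / (a + b)) := by
  rcases (add_nonneg ha hb).eq_or_lt with hs | hs
  · obtain ⟨rfl, rfl⟩ : a = 0 ∧ b = 0 := ⟨by linarith, by linarith⟩
    simp
  linarith [mul_log_sub_mul_le ha hs ht₀, mul_log_sub_mul_le hb hs (sub_pos.2 ht₁)]

lemma mul_log_add_mul_log_one_sub_le_ite {a b t : ℝ} (ha : 0 ≤ a) (hb : 0 ≤ b) (ht₀ : 0 < t)
    (ht₁ : t < 1) :
    a * log t + b * log (1 - t) ≤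
      a * log (if 0 < a + b then a / (a + b) else 1 / 2) +
        b * log (1 - if 0 < a + b then a / (a + b) else 1 / 2) := by
  split_ifs with hs
  · have hsub : 1 - a / (a + b) = b / (a + b) := by field_simp; ring
    rw [hsub]
    exact mul_log_add_mul_log_one_sub_le ha hb ht₀ ht₁
  · obtain ⟨rfl, rfl⟩ : a = 0 ∧ b = 0 := ⟨by linarith, by linarith⟩
    simp

theorem gan_optimal_discriminator_general
    {X : Type*} [MeasurableSpace X]
    (lam : Measure X)
    (f g : X → ℝ)
    (hf0 : ∀ x, 0 ≤ f x) (hg0 : ∀ x, 0 ≤ g x)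
    (Dstar : X → ℝ)
    (hDstar : ∀ x, Dstar x = if 0 < f x + g x then f x / (f x + g x) else 1 / 2)
    (D : X → ℝ) (hD01 : ∀ x, 0 < D x ∧ D x < 1)
    (h1 : Integrable (fun x => f x * Real.log (D x)) lam)
    (h2 : Integrable (fun x => g x * Real.log (1 - D x)) lam)
    (h3 : Integrable (fun x => f x * Real.log (Dstar x)) lam)
    (h4 : Integrable (fun x => g x * Real.log (1 - Dstar x)) lam) :
    (∫ x, f x * Real.log (D x) ∂lam) + (∫ x, g x * Real.log (1 - D x) ∂lam) ≤
      (∫ x, f x * Real.log (Dstar x) ∂lam) + (∫ x, g x * Real.log (1 - Dstar x) ∂lam) := by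
  rw [← integral_add h1 h2, ← integral_add h3 h4]
  refine integral_mono (h1.add h2) (h3.add h4) fun x => ?_
  simp only [hDstar x]
  exact mul_log_add_mul_log_one_sub_le_ite (hf0 x) (hg0 x) (hD01 x).1 (hD01 x).2

/-- **Optimal discriminator.** `ζ` is the latent distribution on `Z`, `G : Z → X` the
generator, `μ` the data distribution, `ν = G_*ζ` the generated distribution; both are
absolutely continuous w.r.t. a σ-finite measure `lam` with densities `f` and `g`.
`Dstar x = f x / (f x + g x)` (and `1/2` where `f x + g x = 0`) maximizes the GAN
discriminator objective among all measurable discriminators with values in `(0,1)`. -/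
theorem gan_optimal_discriminator
    {Z X : Type*} [MeasurableSpace Z] [MeasurableSpace X]
    (ζ : Measure Z) [IsProbabilityMeasure ζ]
    (G : Z → X) (hG : Measurable G)
    (μ ν lam : Measure X) [IsProbabilityMeasure μ] [SigmaFinite lam]
    (hν : ν = ζ.map G)
    (hμlam : μ ≪ lam) (hνlam : ν ≪ lam)
    (f g : X → ℝ) (hf : Measurable f) (hg : Measurable g)
    (hf0 : ∀ x, 0 ≤ f x) (hg0 : ∀ x, 0 ≤ g x)
    (hfd : μ = lam.withDensity fun x => ENNReal.ofReal (f x))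
    (hgd : ν = lam.withDensity fun x => ENNReal.ofReal (g x))
    (Dstar : X → ℝ)
    (hDstar : ∀ x, Dstar x = if 0 < f x + g x then f x / (f x + g x) else 1 / 2)
    (D : X → ℝ) (hD : Measurable D) (hD01 : ∀ x, 0 < D x ∧ D x < 1)
    (h1 : Integrable (fun x => f x * Real.log (D x)) lam)
    (h2 : Integrable (fun x => g x * Real.log (1 - D x)) lam)
    (h3 : Integrable (fun x => f x * Real.log (Dstar x)) lam)
    (h4 : Integrable (fun x => g x * Real.log (1 - Dstar x)) lam) :
    (∫ x, f x * Real.log (D x) ∂lam) + (∫ x, g x * Real.log (1 - D x) ∂lam) ≤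
      (∫ x, f x * Real.log (Dstar x) ∂lam) + (∫ x, g x * Real.log (1 - Dstar x) ∂lam) :=
  gan_optimal_discriminator_general lam f g hf0 hg0 Dstar hDstar D hD01 h1 h2 h3 h4
end

section
/- Let μ and ν be probability measures on a measurable space X, both absolutely continuous with respect to a σ-finite measure λ, with densities f = dμ/dλ and g = dν/dλ. If the function x ↦ f(x)·log(f(x)/(f(x)+g(x))) + g(x)·log(g(x)/(f(x)+g(x))) (with the convention that a term with zero numerator is 0) is λ-integrable, then ∫ (f·log(f/(f+g)) + g·log(g/(f+g))) dλ ≥ −log 4. -/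
open MeasureTheory

/-! With `s = a + b` and `p = a / s`, the integrand equals `-s · h(p)` for the binary entropy `h`,
and `h ≤ log 2`; integrating the resulting bound `-(f + g) log 2` against `λ` gives
`-2 log 2 = -log 4`, since `f` and `g` are probability densities. -/

lemma mul_log_div_add_add_mul_log_div_add_eq_neg_mul_binEntropy {a b : ℝ} (hs : a + b ≠ 0) :
    a * Real.log (a / (a + b)) + b * Real.log (b / (a + b)) =
      -((a + b) * Real.binEntropy (a / (a + b))) := by
  have hcompl : 1 - a / (a + b) = b / (a + b) := by field_simp; ring
  rw [Real.binEntropy, hcompl, Real.log_inv, Real.log_inv]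
  field_simp
  ring

lemma neg_add_mul_log_two_le_mul_log_div_add_add_mul_log_div_add {a b : ℝ}
    (ha : 0 ≤ a) (hb : 0 ≤ b) :
    -(a + b) * Real.log 2 ≤ a * Real.log (a / (a + b)) + b * Real.log (b / (a + b)) := by
  rcases (add_nonneg ha hb).eq_or_lt with hs | hs
  · obtain ⟨rfl, rfl⟩ : a = 0 ∧ b = 0 := ⟨by linarith, by linarith⟩
    simp
  · rw [mul_log_div_add_add_mul_log_div_add_eq_neg_mul_binEntropy hs.ne', neg_mul]
    exact neg_le_neg (mul_le_mul_of_nonneg_left Real.binEntropy_le_log_two hs.le)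

lemma integrable_and_integral_eq_one_of_withDensity_ofReal {X : Type*} [MeasurableSpace X]
    {μ lam : Measure X} [IsProbabilityMeasure μ] {f : X → ℝ}
    (hf : AEStronglyMeasurable f lam) (hf0 : 0 ≤ᵐ[lam] f)
    (hfd : μ = lam.withDensity fun x => ENNReal.ofReal (f x)) :
    Integrable f lam ∧ ∫ x, f x ∂lam = 1 := by
  have hlint : ∫⁻ x, ENNReal.ofReal (f x) ∂lam = 1 := by
    rw [← setLIntegral_univ, ← withDensity_apply _ MeasurableSet.univ, ← hfd, measure_univ]
  refine ⟨⟨hf, (hasFiniteIntegral_iff_ofReal hf0).2 (by simp [hlint])⟩, ?_⟩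
  rw [integral_eq_lintegral_of_nonneg_ae hf0 hf, hlint, ENNReal.toReal_one]

theorem gan_criterion_ge_neg_log_four_general
    {X : Type*} [MeasurableSpace X]
    (μ ν lam : Measure X) [IsProbabilityMeasure μ] [IsProbabilityMeasure ν]
    (f g : X → ℝ) (hf : Measurable f) (hg : Measurable g)
    (hf0 : ∀ x, 0 ≤ f x) (hg0 : ∀ x, 0 ≤ g x)
    (hfd : μ = lam.withDensity fun x => ENNReal.ofReal (f x))
    (hgd : ν = lam.withDensity fun x => ENNReal.ofReal (g x))
    (hint : Integrable (fun x =>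
      f x * Real.log (f x / (f x + g x)) + g x * Real.log (g x / (f x + g x))) lam) :
    -Real.log 4 ≤
      ∫ x, (f x * Real.log (f x / (f x + g x)) + g x * Real.log (g x / (f x + g x))) ∂lam := by
  obtain ⟨hf_int, hf_one⟩ := integrable_and_integral_eq_one_of_withDensity_ofReal
    hf.aestronglyMeasurable (.of_forall hf0) hfd
  obtain ⟨hg_int, hg_one⟩ := integrable_and_integral_eq_one_of_withDensity_ofReal
    hg.aestronglyMeasurable (.of_forall hg0) hgd
  have hlog_four : Real.log 4 = 2 * Real.log 2 := by
    rw [show (4 : ℝ) = 2 ^ 2 by norm_num, Real.log_pow, Nat.cast_ofNat]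
  calc -Real.log 4 = ∫ x, -(f x + g x) * Real.log 2 ∂lam := by
        rw [integral_mul_const, integral_neg, integral_add hf_int hg_int, hf_one, hg_one,
          hlog_four]
        ring
    _ ≤ _ := integral_mono (((hf_int.add hg_int).neg).mul_const _) hint fun x =>
        neg_add_mul_log_two_le_mul_log_div_add_add_mul_log_div_add (hf0 x) (hg0 x)

/-- The GAN virtual training criterion
`C(G) = ∫ (f·log (f/(f+g)) + g·log (g/(f+g))) dλ` (with `0·log 0 = 0`, which is automatic
here since a term with zero numerator carries a factor `0`) is bounded below by `−log 4`. -/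
theorem gan_criterion_ge_neg_log_four
    {X : Type*} [MeasurableSpace X]
    (μ ν lam : Measure X) [IsProbabilityMeasure μ] [IsProbabilityMeasure ν]
    [SigmaFinite lam]
    (hμlam : μ ≪ lam) (hνlam : ν ≪ lam)
    (f g : X → ℝ) (hf : Measurable f) (hg : Measurable g)
    (hf0 : ∀ x, 0 ≤ f x) (hg0 : ∀ x, 0 ≤ g x)
    (hfd : μ = lam.withDensity fun x => ENNReal.ofReal (f x))
    (hgd : ν = lam.withDensity fun x => ENNReal.ofReal (g x))
    (hint : Integrable (fun x =>
      f x * Real.log (f x / (f x + g x)) + g x * Real.log (g x / (f x + g x))) lam) :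
    -Real.log 4 ≤
      ∫ x, (f x * Real.log (f x / (f x + g x)) + g x * Real.log (g x / (f x + g x))) ∂lam :=
  gan_criterion_ge_neg_log_four_general μ ν lam f g hf hg hf0 hg0 hfd hgd hint
end

section
/- Let μ and ν be probability measures on a measurable space X, both absolutely continuous with respect to a σ-finite measure λ, with densities f = dμ/dλ and g = dν/dλ, and assume the function x ↦ f(x)·log(f(x)/(f(x)+g(x))) + g(x)·log(g(x)/(f(x)+g(x))) (with the convention that a term with zero numerator is 0) is λ-integrable. Then ∫ (f·log(f/(f+g)) + g·log(g/(f+g))) dλ = −log 4 if and only if f = g λ-almost everywhere (equivalently, μ = ν); i.e., the global minimum −log 4 of the virtual training criterion C(G) is achieved if and only if the generated distribution equals the data distribution. -/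
/-!
Write `m = (a + b) / 2` and `klFun x = x log x + 1 - x ≥ 0`, which vanishes only at `x = 1`.
Pointwise, `a log (a/(a+b)) + b log (b/(a+b)) + (a + b) log 2 = m (klFun (a/m) + klFun (b/m))`,
so the integrand of `C(G)` is bounded below by `-(f + g) log 2`, with equality exactly where
`f = g`. Since `f` and `g` are probability densities, that lower bound integrates to `-log 4`,
and an integrable function dominating another has the same integral iff they agree a.e.
-/

open MeasureTheory Real InformationTheory

noncomputable def ganIntegrand (a b : ℝ) : ℝ :=
  a * log (a / (a + b)) + b * log (b / (a + b))

lemma mul_log_div_eq_mul_klFun_add_sub (a : ℝ) {m : ℝ} (hm : m ≠ 0) :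
    a * log (a / m) = m * klFun (a / m) + (a - m) := by
  rw [klFun_apply]
  field_simp
  ring

lemma mul_log_div_add_mul_log_two (a : ℝ) {s : ℝ} (hs : s ≠ 0) :
    a * log (a / s) + a * log 2 = a * log (a / (s / 2)) := by
  rcases eq_or_ne a 0 with rfl | ha
  · simp
  · rw [← mul_add, ← log_mul (div_ne_zero ha hs) two_ne_zero, div_div_eq_mul_div,
      div_mul_eq_mul_div]

lemma ganIntegrand_add_mul_log_two_eq (a b : ℝ) (hab : a + b ≠ 0) :
    ganIntegrand a b + (a + b) * log 2 =
      (a + b) / 2 * (klFun (a / ((a + b) / 2)) + klFun (b / ((a + b) / 2))) := by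
  have hm : (a + b) / 2 ≠ 0 := by positivity
  rw [ganIntegrand, add_mul, add_add_add_comm, mul_log_div_add_mul_log_two a hab,
    mul_log_div_add_mul_log_two b hab, mul_log_div_eq_mul_klFun_add_sub a hm,
    mul_log_div_eq_mul_klFun_add_sub b hm]
  ring

lemma neg_mul_log_two_le_ganIntegrand {a b : ℝ} (ha : 0 ≤ a) (hb : 0 ≤ b) :
    -((a + b) * log 2) ≤ ganIntegrand a b := by
  rcases (add_nonneg ha hb).eq_or_lt with hab | hab
  · obtain ⟨rfl, rfl⟩ : a = 0 ∧ b = 0 := ⟨by linarith, by linarith⟩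
    simp [ganIntegrand]
  · have hgap : 0 ≤ (a + b) / 2 * (klFun (a / ((a + b) / 2)) + klFun (b / ((a + b) / 2))) :=
      mul_nonneg (by positivity)
        (add_nonneg (klFun_nonneg (by positivity)) (klFun_nonneg (by positivity)))
    linarith [ganIntegrand_add_mul_log_two_eq a b hab.ne']

lemma ganIntegrand_eq_neg_mul_log_two_iff {a b : ℝ} (ha : 0 ≤ a) (hb : 0 ≤ b) :
    ganIntegrand a b = -((a + b) * log 2) ↔ a = b := by
  rcases (add_nonneg ha hb).eq_or_lt with hab | hab
  · obtain ⟨rfl, rfl⟩ : a = 0 ∧ b = 0 := ⟨by linarith, by linarith⟩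
    simp [ganIntegrand]
  set m := (a + b) / 2
  have hm : 0 < m := by positivity
  rw [← add_eq_zero_iff_eq_neg, ganIntegrand_add_mul_log_two_eq a b hab.ne', mul_eq_zero,
    or_iff_right hm.ne', add_eq_zero_iff_of_nonneg (klFun_nonneg (by positivity))
      (klFun_nonneg (by positivity)), klFun_eq_zero_iff (by positivity),
    klFun_eq_zero_iff (by positivity), div_eq_one_iff_eq hm.ne', div_eq_one_iff_eq hm.ne']
  constructor
  · exact fun ⟨ham, hbm⟩ => ham.trans hbm.symm
  · rintro rfl; constructor <;> ring

section ProbabilityDensity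

variable {X : Type*} [MeasurableSpace X] {lam : Measure X} {f : X → ℝ}

lemma lintegral_ofReal_eq_one_of_isProbabilityMeasure_withDensity
    [IsProbabilityMeasure (lam.withDensity fun x => ENNReal.ofReal (f x))] :
    ∫⁻ x, ENNReal.ofReal (f x) ∂lam = 1 := by
  have h := measure_univ (μ := lam.withDensity fun x => ENNReal.ofReal (f x))
  rwa [withDensity_apply _ MeasurableSet.univ, setLIntegral_univ] at h

lemma integrable_of_isProbabilityMeasure_withDensity (hf : AEStronglyMeasurable f lam)
    (hf0 : 0 ≤ᵐ[lam] f) [IsProbabilityMeasure (lam.withDensity fun x => ENNReal.ofReal (f x))] :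
    Integrable f lam :=
  ⟨hf, (hasFiniteIntegral_iff_ofReal hf0).2 <| by
    simp [lintegral_ofReal_eq_one_of_isProbabilityMeasure_withDensity]⟩

lemma integral_eq_one_of_isProbabilityMeasure_withDensity (hf : AEStronglyMeasurable f lam)
    (hf0 : 0 ≤ᵐ[lam] f) [IsProbabilityMeasure (lam.withDensity fun x => ENNReal.ofReal (f x))] :
    ∫ x, f x ∂lam = 1 := by
  simp [integral_eq_lintegral_of_nonneg_ae hf0 hf,
    lintegral_ofReal_eq_one_of_isProbabilityMeasure_withDensity]

end ProbabilityDensity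

theorem gan_criterion_eq_neg_log_four_iff_general
    {X : Type*} [MeasurableSpace X]
    (μ ν lam : Measure X) [IsProbabilityMeasure μ] [IsProbabilityMeasure ν]
    (f g : X → ℝ) (hf : Measurable f) (hg : Measurable g)
    (hf0 : ∀ x, 0 ≤ f x) (hg0 : ∀ x, 0 ≤ g x)
    (hfd : μ = lam.withDensity fun x => ENNReal.ofReal (f x))
    (hgd : ν = lam.withDensity fun x => ENNReal.ofReal (g x))
    (hint : Integrable (fun x =>
      f x * Real.log (f x / (f x + g x)) + g x * Real.log (g x / (f x + g x))) lam) :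
    (∫ x, (f x * Real.log (f x / (f x + g x)) + g x * Real.log (g x / (f x + g x))) ∂lam)
        = -Real.log 4 ↔ f =ᵐ[lam] g := by
  subst hfd hgd
  have hf1 : ∫ x, f x ∂lam = 1 :=
    integral_eq_one_of_isProbabilityMeasure_withDensity hf.aestronglyMeasurable (ae_of_all _ hf0)
  have hg1 : ∫ x, g x ∂lam = 1 :=
    integral_eq_one_of_isProbabilityMeasure_withDensity hg.aestronglyMeasurable (ae_of_all _ hg0)
  have hfi : Integrable f lam :=
    integrable_of_isProbabilityMeasure_withDensity hf.aestronglyMeasurable (ae_of_all _ hf0)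
  have hgi : Integrable g lam :=
    integrable_of_isProbabilityMeasure_withDensity hg.aestronglyMeasurable (ae_of_all _ hg0)
  have hbound : ∫ x, -((f x + g x) * log 2) ∂lam = -log 4 := by
    rw [integral_neg, integral_mul_const, integral_add hfi hgi, hf1, hg1, log_four_eq]
    ring
  have hbound_int : Integrable (fun x => -((f x + g x) * log 2)) lam :=
    ((hfi.add hgi).mul_const _).neg
  rw [← hbound, eq_comm, integral_eq_iff_of_ae_le hbound_int hint
    (ae_of_all _ fun x => neg_mul_log_two_le_ganIntegrand (hf0 x) (hg0 x))]
  exact Filter.eventually_congr (ae_of_all _ fun x => eq_comm.trans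
    (ganIntegrand_eq_neg_mul_log_two_iff (hf0 x) (hg0 x)))

/-- The global minimum `−log 4` of the GAN virtual training criterion
`C(G) = ∫ (f·log (f/(f+g)) + g·log (g/(f+g))) dλ` is achieved iff `f = g` `λ`-a.e.,
i.e. iff the generated distribution equals the data distribution. -/
theorem gan_criterion_eq_neg_log_four_iff
    {X : Type*} [MeasurableSpace X]
    (μ ν lam : Measure X) [IsProbabilityMeasure μ] [IsProbabilityMeasure ν]
    [SigmaFinite lam]
    (hμlam : μ ≪ lam) (hνlam : ν ≪ lam)
    (f g : X → ℝ) (hf : Measurable f) (hg : Measurable g)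
    (hf0 : ∀ x, 0 ≤ f x) (hg0 : ∀ x, 0 ≤ g x)
    (hfd : μ = lam.withDensity fun x => ENNReal.ofReal (f x))
    (hgd : ν = lam.withDensity fun x => ENNReal.ofReal (g x))
    (hint : Integrable (fun x =>
      f x * Real.log (f x / (f x + g x)) + g x * Real.log (g x / (f x + g x))) lam) :
    (∫ x, (f x * Real.log (f x / (f x + g x)) + g x * Real.log (g x / (f x + g x))) ∂lam)
        = -Real.log 4 ↔ f =ᵐ[lam] g :=
  gan_criterion_eq_neg_log_four_iff_general μ ν lam f g hf hg hf0 hg0 hfd hgd hint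
end

section
/- Let μ and ν be probability measures on a measurable space X, both absolutely continuous with respect to a σ-finite measure λ, with densities f = dμ/dλ and g = dν/dλ, and let m = (1/2)·μ + (1/2)·ν be the midpoint measure. If the function x ↦ f(x)·log(f(x)/(f(x)+g(x))) + g(x)·log(g(x)/(f(x)+g(x))) (with the convention that a term with zero numerator is 0) is λ-integrable, then the Kullback–Leibler divergences KL(μ ‖ m) and KL(ν ‖ m) are finite and KL(μ ‖ m) + KL(ν ‖ m) = log 4 + ∫ (f·log(f/(f+g)) + g·log(g/(f+g))) dλ; in other words, the GAN objective at the optimal discriminator equals −log 4 plus twice the Jensen–Shannon divergence between μ and ν. -/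
open MeasureTheory
open scoped ENNReal

/-! If `m = λ.withDensity ((f + g) / 2)`, then `dμ/dm = 2f/(f + g)` on `{f > 0}`, which carries
`μ`; hence `KL(μ‖m) = log 2 + ∫ f log (f/(f + g)) dλ`, and symmetrically for `ν`. Both summands of
the integrand are nonpositive, so the integrability of their sum gives that of each. -/

lemma Real.mul_log_div_nonpos {a b : ℝ} (ha : 0 ≤ a) (hab : a ≤ b) : a * Real.log (a / b) ≤ 0 :=
  mul_nonpos_of_nonneg_of_nonpos ha <|
    Real.log_nonpos (div_nonneg ha (ha.trans hab)) (div_le_one_of_le₀ hab (ha.trans hab))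

lemma Real.log_div_div_two {a b : ℝ} (ha : a ≠ 0) (hb : b ≠ 0) :
    Real.log (a / (b / 2)) = Real.log 2 + Real.log (a / b) := by
  rw [← Real.log_mul two_ne_zero (div_ne_zero ha hb)]
  congr 1
  field_simp

namespace MeasureTheory

variable {X : Type*} [MeasurableSpace X] {lam μ m : Measure X}

lemma integrable_withDensity_ofReal_iff {f : X → ℝ} (hf : Measurable f) (hf0 : ∀ x, 0 ≤ f x)
    {F : X → ℝ} :
    Integrable F (lam.withDensity fun x => ENNReal.ofReal (f x)) ↔
      Integrable (fun x => f x * F x) lam := by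
  rw [integrable_withDensity_iff_integrable_smul' hf.ennreal_ofReal
    (ae_of_all _ fun _ => ENNReal.ofReal_lt_top)]
  simp only [ENNReal.toReal_ofReal (hf0 _), smul_eq_mul]

lemma integral_withDensity_ofReal {f : X → ℝ} (hf : Measurable f) (hf0 : ∀ x, 0 ≤ f x)
    (F : X → ℝ) :
    ∫ x, F x ∂lam.withDensity (fun x => ENNReal.ofReal (f x)) = ∫ x, f x * F x ∂lam := by
  rw [integral_withDensity_eq_integral_toReal_smul hf.ennreal_ofReal
    (ae_of_all _ fun _ => ENNReal.ofReal_lt_top)]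
  simp only [ENNReal.toReal_ofReal (hf0 _), smul_eq_mul]

lemma ae_pos_withDensity_ofReal {f : X → ℝ} (hf : Measurable f) :
    ∀ᵐ x ∂lam.withDensity (fun x => ENNReal.ofReal (f x)), 0 < f x :=
  (ae_withDensity_iff hf.ennreal_ofReal).2 <| ae_of_all _ fun _ hx =>
    ENNReal.ofReal_pos.1 (pos_iff_ne_zero.2 hx)

lemma smul_withDensity_ofReal_add_smul_withDensity_ofReal {f g : X → ℝ} (hf : Measurable f)
    (hg : Measurable g) (hf0 : ∀ x, 0 ≤ f x) (hg0 : ∀ x, 0 ≤ g x) :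
    (2⁻¹ : ℝ≥0∞) • lam.withDensity (fun x => ENNReal.ofReal (f x)) +
        (2⁻¹ : ℝ≥0∞) • lam.withDensity (fun x => ENNReal.ofReal (g x)) =
      lam.withDensity fun x => ENNReal.ofReal ((f x + g x) / 2) := by
  rw [← withDensity_smul _ hf.ennreal_ofReal, ← withDensity_smul _ hg.ennreal_ofReal,
    ← withDensity_add_right _ (hg.ennreal_ofReal.const_smul _)]
  congr 1
  ext x
  rw [add_div, ENNReal.ofReal_add (by linarith [hf0 x]) (by linarith [hg0 x]),
    ENNReal.ofReal_div_of_pos two_pos, ENNReal.ofReal_div_of_pos two_pos]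
  simp [ENNReal.div_eq_inv_mul]

lemma toReal_rnDeriv_withDensity_ofReal_ae_eq {f h : X → ℝ} (hf : Measurable f)
    (hh : Measurable h) (hh0 : ∀ x, 0 ≤ h x) (hfh : ∀ x, 0 < f x → 0 < h x)
    (hμ : μ = lam.withDensity fun x => ENNReal.ofReal (f x))
    (hm : m = lam.withDensity fun x => ENNReal.ofReal (h x)) [SigmaFinite m] :
    (fun x => (μ.rnDeriv m x).toReal) =ᵐ[μ] fun x => f x / h x := by
  have hk : Measurable fun x => ENNReal.ofReal (f x / h x) := (hf.div hh).ennreal_ofReal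
  have hμm : μ = m.withDensity fun x => ENNReal.ofReal (f x / h x) := by
    rw [hμ, hm, ← withDensity_mul _ hh.ennreal_ofReal hk]
    congr 1
    ext x
    rcases le_or_gt (f x) 0 with hx | hx
    · simp [ENNReal.ofReal_of_nonpos hx,
        ENNReal.ofReal_of_nonpos (div_nonpos_of_nonpos_of_nonneg hx (hh0 x))]
    · rw [Pi.mul_apply, ← ENNReal.ofReal_mul (hh0 x), mul_div_cancel₀ _ (hfh x hx).ne']
  have hrn : μ.rnDeriv m =ᵐ[m] fun x => ENNReal.ofReal (f x / h x) := by
    rw [hμm]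
    exact Measure.rnDeriv_withDensity m hk
  have hμm_ac : μ ≪ m := hμm ▸ withDensity_absolutelyContinuous _ _
  filter_upwards [hμm_ac hrn, hμ ▸ ae_pos_withDensity_ofReal hf] with x hx hfx
  rw [hx, ENNReal.toReal_ofReal (div_nonneg hfx.le (hh0 x))]

lemma integrable_log_rnDeriv_and_integral_eq_of_withDensity_half {f s : X → ℝ}
    (hf : Measurable f) (hs : Measurable s) (hf0 : ∀ x, 0 ≤ f x) (hfs : ∀ x, f x ≤ s x)
    (hμ : μ = lam.withDensity fun x => ENNReal.ofReal (f x))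
    (hm : m = lam.withDensity fun x => ENNReal.ofReal (s x / 2))
    [IsProbabilityMeasure μ] [SigmaFinite m]
    (hint : Integrable (fun x => f x * Real.log (f x / s x)) lam) :
    Integrable (fun x => Real.log (μ.rnDeriv m x).toReal) μ ∧
      ∫ x, Real.log (μ.rnDeriv m x).toReal ∂μ =
        Real.log 2 + ∫ x, f x * Real.log (f x / s x) ∂lam := by
  have hlog : (fun x => Real.log (μ.rnDeriv m x).toReal) =ᵐ[μ]
      fun x => Real.log 2 + Real.log (f x / s x) := by
    filter_upwards [toReal_rnDeriv_withDensity_ofReal_ae_eq hf (hs.div_const 2)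
        (fun x => by linarith [hf0 x, hfs x]) (fun x hx => by linarith [hfs x]) hμ hm,
      hμ ▸ ae_pos_withDensity_ofReal hf] with x hx hfx
    rw [hx, Real.log_div_div_two hfx.ne' (hfx.trans_le (hfs x)).ne']
  have hint' : Integrable (fun x => Real.log (f x / s x)) μ :=
    hμ ▸ (integrable_withDensity_ofReal_iff hf hf0).2 hint
  refine ⟨((integrable_const _).add hint').congr hlog.symm, ?_⟩
  rw [integral_congr_ae hlog, integral_add (integrable_const _) hint', integral_const,
    probReal_univ, one_smul, hμ, integral_withDensity_ofReal hf hf0]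

end MeasureTheory

theorem gan_criterion_eq_jensen_shannon_general
    {X : Type*} [MeasurableSpace X]
    (μ ν lam : Measure X) [IsProbabilityMeasure μ] [IsProbabilityMeasure ν]
    (f g : X → ℝ) (hf : Measurable f) (hg : Measurable g)
    (hf0 : ∀ x, 0 ≤ f x) (hg0 : ∀ x, 0 ≤ g x)
    (hfd : μ = lam.withDensity fun x => ENNReal.ofReal (f x))
    (hgd : ν = lam.withDensity fun x => ENNReal.ofReal (g x))
    (m : Measure X) (hm : m = (2⁻¹ : ℝ≥0∞) • μ + (2⁻¹ : ℝ≥0∞) • ν)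
    (hint : Integrable (fun x =>
      f x * Real.log (f x / (f x + g x)) + g x * Real.log (g x / (f x + g x))) lam) :
    Integrable (fun x => Real.log ((μ.rnDeriv m x).toReal)) μ ∧
    Integrable (fun x => Real.log ((ν.rnDeriv m x).toReal)) ν ∧
    (∫ x, Real.log ((μ.rnDeriv m x).toReal) ∂μ) +
        (∫ x, Real.log ((ν.rnDeriv m x).toReal) ∂ν) =
      Real.log 4 +
        ∫ x, (f x * Real.log (f x / (f x + g x)) + g x * Real.log (g x / (f x + g x))) ∂lam := by
  have hfg : Measurable fun x => f x + g x := hf.add hg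
  have hmd : m = lam.withDensity fun x => ENNReal.ofReal ((f x + g x) / 2) := by
    rw [hm, hfd, hgd, smul_withDensity_ofReal_add_smul_withDensity_ofReal hf hg hf0 hg0]
  have : IsProbabilityMeasure m := ⟨by simp [hm, ENNReal.inv_two_add_inv_two]⟩
  obtain ⟨hint_f, hint_g⟩ := (integrable_add_iff_of_nonpos
    (f := fun x => f x * Real.log (f x / (f x + g x)))
    (hf.mul (hf.div hfg).log).aestronglyMeasurable
    (ae_of_all _ fun x => Real.mul_log_div_nonpos (hf0 x) (le_add_of_nonneg_right (hg0 x)))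
    (ae_of_all _ fun x => Real.mul_log_div_nonpos (hg0 x) (le_add_of_nonneg_left (hf0 x)))).1 hint
  obtain ⟨hIμ, hKLμ⟩ := integrable_log_rnDeriv_and_integral_eq_of_withDensity_half hf hfg hf0
    (fun x => le_add_of_nonneg_right (hg0 x)) hfd hmd hint_f
  obtain ⟨hIν, hKLν⟩ := integrable_log_rnDeriv_and_integral_eq_of_withDensity_half hg hfg hg0
    (fun x => le_add_of_nonneg_left (hf0 x)) hgd hmd hint_g
  refine ⟨hIμ, hIν, ?_⟩
  rw [hKLμ, hKLν, integral_add hint_f hint_g, show (4 : ℝ) = 2 * 2 by norm_num,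
    Real.log_mul two_ne_zero two_ne_zero]
  ring

/-- With `m = (1/2)·μ + (1/2)·ν` the midpoint measure, the Kullback–Leibler divergences
`KL(μ‖m) = ∫ log (dμ/dm) dμ` and `KL(ν‖m)` are finite (the log-density is integrable) and
`KL(μ‖m) + KL(ν‖m) = log 4 + ∫ (f·log (f/(f+g)) + g·log (g/(f+g))) dλ`;
i.e. the GAN objective at the optimal discriminator is `−log 4` plus twice the
Jensen–Shannon divergence of `μ` and `ν`. -/
theorem gan_criterion_eq_jensen_shannon
    {X : Type*} [MeasurableSpace X]
    (μ ν lam : Measure X) [IsProbabilityMeasure μ] [IsProbabilityMeasure ν]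
    [SigmaFinite lam]
    (hμlam : μ ≪ lam) (hνlam : ν ≪ lam)
    (f g : X → ℝ) (hf : Measurable f) (hg : Measurable g)
    (hf0 : ∀ x, 0 ≤ f x) (hg0 : ∀ x, 0 ≤ g x)
    (hfd : μ = lam.withDensity fun x => ENNReal.ofReal (f x))
    (hgd : ν = lam.withDensity fun x => ENNReal.ofReal (g x))
    (m : Measure X) (hm : m = (2⁻¹ : ℝ≥0∞) • μ + (2⁻¹ : ℝ≥0∞) • ν)
    (hint : Integrable (fun x =>
      f x * Real.log (f x / (f x + g x)) + g x * Real.log (g x / (f x + g x))) lam) :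
    Integrable (fun x => Real.log ((μ.rnDeriv m x).toReal)) μ ∧
    Integrable (fun x => Real.log ((ν.rnDeriv m x).toReal)) ν ∧
    (∫ x, Real.log ((μ.rnDeriv m x).toReal) ∂μ) +
        (∫ x, Real.log ((ν.rnDeriv m x).toReal) ∂ν) =
      Real.log 4 +
        ∫ x, (f x * Real.log (f x / (f x + g x)) + g x * Real.log (g x / (f x + g x))) ∂lam :=
  gan_criterion_eq_jensen_shannon_general μ ν lam f g hf hg hf0 hg0 hfd hgd m hm hint
end

section
/- Let P and A be n×n complex matrices with P Hermitian and P² = 1, and let ψ ∈ ℂⁿ. Define f : ℝ → ℂ by f(θ) = ⟨exp(−(i·θ/2)·P)ψ, A·exp(−(i·θ/2)·P)ψ⟩, where ⟨·,·⟩ is the standard Hermitian inner product on ℂⁿ and exp is the matrix exponential. Then there exist constants a, b, c ∈ ℂ such that f(θ) = a + b·cos θ + c·sin θ for all real θ. -/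
open Matrix

/-! Since `P² = 1`, the exponential series splits into its even and odd parts, giving
`exp (z • P) = cosh z • 1 + sinh z • P`; so the rotated state is
`cos (θ/2) • ψ - i sin (θ/2) • Pψ`. The expectation value is then a quadratic form in
`cos (θ/2)` and `sin (θ/2)`, which the half-angle formulas turn into `a + b cos θ + c sin θ`. -/

open NormedSpace in
theorem exp_smul_eq_cosh_add_sinh_of_mul_self_eq_one {𝔸 : Type*} [Ring 𝔸] [Algebra ℂ 𝔸]
    [TopologicalSpace 𝔸] [IsTopologicalRing 𝔸] [ContinuousSMul ℂ 𝔸] [T2Space 𝔸]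
    {P : 𝔸} (hP : P * P = 1) (z : ℂ) :
    exp (z • P) = Complex.cosh z • (1 : 𝔸) + Complex.sinh z • P := by
  have hP_even (k : ℕ) : P ^ (2 * k) = 1 := by rw [pow_mul, sq, hP, one_pow]
  rw [exp_eq_tsum ℂ]
  refine HasSum.tsum_eq (HasSum.even_add_odd ?_ ?_)
  · convert z.hasSum_cosh.smul_const (1 : 𝔸) using 2 with k
    rw [smul_pow, hP_even, smul_smul, div_eq_inv_mul]
  · convert z.hasSum_sinh.smul_const P using 2 with k
    rw [smul_pow, pow_succ P, hP_even, one_mul, smul_smul, div_eq_inv_mul]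

theorem exp_neg_I_mul_div_two_smul_of_mul_self_eq_one {𝔸 : Type*} [Ring 𝔸] [Algebra ℂ 𝔸]
    [TopologicalSpace 𝔸] [IsTopologicalRing 𝔸] [ContinuousSMul ℂ 𝔸] [T2Space 𝔸]
    {P : 𝔸} (hP : P * P = 1) (θ : ℝ) :
    NormedSpace.exp ((-(Complex.I * (θ : ℂ) / 2)) • P) =
      (Real.cos (θ / 2) : ℂ) • (1 : 𝔸) + (-Complex.I * Real.sin (θ / 2)) • P := by
  have hz : -(Complex.I * (θ : ℂ) / 2) = ((-(θ / 2) : ℝ) : ℂ) * Complex.I := by push_cast; ring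
  rw [exp_smul_eq_cosh_add_sinh_of_mul_self_eq_one hP, hz, Complex.cosh_mul_I, Complex.sinh_mul_I]
  push_cast
  simp only [Complex.cos_neg, Complex.sin_neg]
  ring_nf

theorem star_smul_add_smul_dotProduct_mulVec {n : Type*} [Fintype n]
    (A : Matrix n n ℂ) (α β : ℂ) (ψ φ : n → ℂ) :
    star (α • ψ + β • φ) ⬝ᵥ A *ᵥ (α • ψ + β • φ) =
      star α * α * (star ψ ⬝ᵥ A *ᵥ ψ) + star α * β * (star ψ ⬝ᵥ A *ᵥ φ) +
        star β * α * (star φ ⬝ᵥ A *ᵥ ψ) + star β * β * (star φ ⬝ᵥ A *ᵥ φ) := by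
  simp only [star_add, star_smul, mulVec_add, mulVec_smul, dotProduct_add, add_dotProduct,
    smul_dotProduct, dotProduct_smul, smul_eq_mul]
  ring

theorem rotation_expectation_sinusoidal_general
    {n : ℕ} (P A : Matrix (Fin n) (Fin n) ℂ)
    (hP : P * P = 1) (ψ : Fin n → ℂ) :
    ∃ a b c : ℂ, ∀ θ : ℝ,
      star ((NormedSpace.exp ((-(Complex.I * (θ : ℂ) / 2)) • P)).mulVec ψ) ⬝ᵥ
          (A.mulVec ((NormedSpace.exp ((-(Complex.I * (θ : ℂ) / 2)) • P)).mulVec ψ)) =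
        a + b * Real.cos θ + c * Real.sin θ := by
  set x := star ψ ⬝ᵥ A *ᵥ ψ
  set u := star ψ ⬝ᵥ A *ᵥ (P *ᵥ ψ)
  set v := star (P *ᵥ ψ) ⬝ᵥ A *ᵥ ψ
  set w := star (P *ᵥ ψ) ⬝ᵥ A *ᵥ (P *ᵥ ψ)
  refine ⟨(x + w) / 2, (x - w) / 2, Complex.I * (v - u) / 2, fun θ => ?_⟩
  rw [exp_neg_I_mul_div_two_smul_of_mul_self_eq_one hP, add_mulVec, smul_mulVec, smul_mulVec,
    one_mulVec, star_smul_add_smul_dotProduct_mulVec]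
  simp only [Complex.star_def, map_mul, map_neg, Complex.conj_I, Complex.conj_ofReal]
  have hθ : θ = 2 * (θ / 2) := by ring
  have hcos : (Real.cos θ : ℂ) = 2 * Real.cos (θ / 2) ^ 2 - 1 := by
    nth_rw 1 [hθ]; push_cast [Real.cos_two_mul]; ring
  have hsin : (Real.sin θ : ℂ) = 2 * Real.sin (θ / 2) * Real.cos (θ / 2) := by
    nth_rw 1 [hθ]; push_cast [Real.sin_two_mul]; ring
  have hpyth : (Real.sin (θ / 2) : ℂ) ^ 2 + Real.cos (θ / 2) ^ 2 = 1 := by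
    exact_mod_cast Real.sin_sq_add_cos_sq (θ / 2)
  rw [hcos, hsin]
  linear_combination w * hpyth + (-(Real.sin (θ / 2) : ℂ) ^ 2 * w) * Complex.I_sq

/-- For a Hermitian involution `P` (`P² = 1`), an observable `A`, and a state `ψ ∈ ℂⁿ`,
the expectation value `f θ = ⟨exp (−(i·θ/2)·P) ψ, A · exp (−(i·θ/2)·P) ψ⟩` depends
sinusoidally on `θ`: there are `a b c : ℂ` with `f θ = a + b·cos θ + c·sin θ`. -/
theorem rotation_expectation_sinusoidal
    {n : ℕ} (P A : Matrix (Fin n) (Fin n) ℂ)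
    (hHerm : P.IsHermitian) (hP : P * P = 1) (ψ : Fin n → ℂ) :
    ∃ a b c : ℂ, ∀ θ : ℝ,
      star ((NormedSpace.exp ((-(Complex.I * (θ : ℂ) / 2)) • P)).mulVec ψ) ⬝ᵥ
          (A.mulVec ((NormedSpace.exp ((-(Complex.I * (θ : ℂ) / 2)) • P)).mulVec ψ)) =
        a + b * Real.cos θ + c * Real.sin θ :=
  rotation_expectation_sinusoidal_general P A hP ψ
end

section
/- Let f : ℝ → ℂ be of the form f(θ) = a + b·cos θ + c·sin θ for constants a, b, c ∈ ℂ. Then for every real θ, f is differentiable at θ and its derivative satisfies f′(θ) = (f(θ + π/2) − f(θ − π/2))/2. -/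
open Real

/-! Each shift by `π/2` rotates the coefficient pair `(b, c)` of `cos` and `sin` by a quarter turn,
which is exactly what differentiation does; the constant term cancels in the difference. -/

section Sinusoid

variable {E : Type*} [NormedAddCommGroup E] [NormedSpace ℝ E]

noncomputable def sinusoid (a b c : E) (θ : ℝ) : E := a + Real.cos θ • b + Real.sin θ • c

theorem hasDerivAt_sinusoid (a b c : E) (θ : ℝ) :
    HasDerivAt (sinusoid a b c) (sinusoid 0 c (-b) θ) θ := by
  have h := ((hasDerivAt_const θ a).add ((hasDerivAt_cos θ).smul_const b)).add
    ((hasDerivAt_sin θ).smul_const c)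
  refine h.congr_deriv ?_
  simp only [sinusoid, zero_add, smul_neg, neg_smul]
  abel

theorem sinusoid_add_pi_div_two (a b c : E) (θ : ℝ) :
    sinusoid a b c (θ + π / 2) = sinusoid a c (-b) θ := by
  simp only [sinusoid, cos_add_pi_div_two, sin_add_pi_div_two, neg_smul, smul_neg]
  abel

theorem sinusoid_sub_pi_div_two (a b c : E) (θ : ℝ) :
    sinusoid a b c (θ - π / 2) = sinusoid a (-c) b θ := by
  simp only [sinusoid, cos_sub_pi_div_two, sin_sub_pi_div_two, neg_smul, smul_neg]
  abel

end Sinusoid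

/-- **Parameter shift rule, trigonometric form.** If `f θ = a + b·cos θ + c·sin θ`,
then `f` is differentiable at every `θ` with derivative
`(f (θ + π/2) − f (θ − π/2))/2`. -/
theorem parameter_shift_rule_sinusoidal
    (a b c : ℂ) (f : ℝ → ℂ)
    (hf : ∀ θ : ℝ, f θ = a + b * Real.cos θ + c * Real.sin θ) (θ : ℝ) :
    HasDerivAt f ((f (θ + π / 2) - f (θ - π / 2)) / 2) θ := by
  have hf_eq : f = sinusoid a b c := funext fun θ => by
    simp only [hf, sinusoid, Complex.real_smul, mul_comm]
  subst hf_eq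
  refine (hasDerivAt_sinusoid a b c θ).congr_deriv ?_
  rw [sinusoid_add_pi_div_two, sinusoid_sub_pi_div_two]
  simp only [sinusoid, Complex.real_smul]
  ring
end

section
/- (Parameter shift rule.) Let P and A be n×n complex matrices with P Hermitian and P² = 1, and let ψ ∈ ℂⁿ. Define f : ℝ → ℂ by f(θ) = ⟨exp(−(i·θ/2)·P)ψ, A·exp(−(i·θ/2)·P)ψ⟩, where ⟨·,·⟩ is the standard Hermitian inner product on ℂⁿ and exp is the matrix exponential. Then f is differentiable and for every real θ, f′(θ) = (f(θ + π/2) − f(θ − π/2))/2; i.e., the gradient of the circuit expectation with respect to the rotation angle is obtained by evaluating the same expectation at the angle shifted by ±π/2. -/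
/-!
For an involution `P`, the exponential series splits into even and odd parts, giving
`exp (−(iθ/2)P) = cos (θ/2) − i sin (θ/2) P`. Expanding the expectation and using the half-angle
formulas shows that `f θ = a + b cos θ + c sin θ` for constants `a b c`, and for such a sinusoid
the values at `θ ± π/2` are `a ∓ b sin θ ± c cos θ`, whose half-difference is `f′(θ)`.
-/

open Matrix Real

theorem NormedSpace.exp_mul_I_smul_of_mul_self_eq_one {𝔸 : Type*} [Ring 𝔸] [Algebra ℂ 𝔸]
    [TopologicalSpace 𝔸] [IsTopologicalRing 𝔸] [ContinuousSMul ℂ 𝔸] [T2Space 𝔸]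
    {P : 𝔸} (hP : P * P = 1) (z : ℂ) :
    NormedSpace.exp ((z * Complex.I) • P)
      = Complex.cos z • 1 + (Complex.I * Complex.sin z) • P := by
  rw [NormedSpace.exp_eq_tsum ℂ]
  refine HasSum.tsum_eq (HasSum.even_add_odd ?_ ?_)
  · convert (Complex.hasSum_cos' z).smul_const (1 : 𝔸) using 2 with k
    rw [smul_pow, pow_mul P, sq, hP, one_pow, smul_smul, div_eq_inv_mul, mul_comm]
  · convert ((Complex.hasSum_sin' z).mul_left Complex.I).smul_const P using 2 with k
    rw [smul_pow, pow_succ P, pow_mul P, sq, hP, one_pow, one_mul, smul_smul,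
      mul_div_cancel₀ _ Complex.I_ne_zero, div_eq_inv_mul, mul_comm]

theorem hasDerivAt_shift_of_eq_add_cos_smul_add_sin_smul {E : Type*} [NormedAddCommGroup E]
    [NormedSpace ℝ E] {g : ℝ → E} {a b c : E}
    (hg : ∀ t, g t = a + cos t • b + sin t • c) (θ : ℝ) :
    HasDerivAt g ((2 : ℝ)⁻¹ • (g (θ + π / 2) - g (θ - π / 2))) θ := by
  have hderiv : HasDerivAt g (-sin θ • b + cos θ • c) θ := by
    rw [funext hg]
    exact (((hasDerivAt_cos θ).smul_const b).const_add a).fun_add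
      ((hasDerivAt_sin θ).smul_const c)
  convert hderiv using 1
  rw [hg, hg, cos_add_pi_div_two, sin_add_pi_div_two, cos_sub_pi_div_two, sin_sub_pi_div_two]
  module

section Rotation

variable {m : Type*} [Fintype m]

theorem star_dotProduct_mulVec_cos_sub_I_sin (A : Matrix m m ℂ) (x y : m → ℂ) (c s : ℝ) :
    star ((c : ℂ) • x - (Complex.I * s) • y) ⬝ᵥ A *ᵥ ((c : ℂ) • x - (Complex.I * s) • y)
      = c ^ 2 * (star x ⬝ᵥ A *ᵥ x) + s ^ 2 * (star y ⬝ᵥ A *ᵥ y)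
        + Complex.I * c * s * (star y ⬝ᵥ A *ᵥ x - star x ⬝ᵥ A *ᵥ y) := by
  simp only [star_sub, star_smul, mulVec_sub, mulVec_smul, sub_dotProduct, dotProduct_sub,
    smul_dotProduct, dotProduct_smul, smul_eq_mul, star_mul', Complex.star_def,
    Complex.conj_ofReal, Complex.conj_I]
  linear_combination -(s : ℂ) ^ 2 * (star y ⬝ᵥ A *ᵥ y) * Complex.I_sq

variable [DecidableEq m]

theorem exp_neg_I_mul_half_smul_mulVec {P : Matrix m m ℂ} (hP : P * P = 1) (ψ : m → ℂ) (t : ℝ) :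
    NormedSpace.exp ((-(Complex.I * (t : ℂ) / 2)) • P) *ᵥ ψ
      = (cos (t / 2) : ℂ) • ψ - (Complex.I * sin (t / 2)) • (P *ᵥ ψ) := by
  have harg : -(Complex.I * (t : ℂ) / 2) = (-(t / 2 : ℝ) : ℂ) * Complex.I := by push_cast; ring
  rw [harg, NormedSpace.exp_mul_I_smul_of_mul_self_eq_one hP, Complex.cos_neg, Complex.sin_neg,
    ← Complex.ofReal_cos, ← Complex.ofReal_sin, add_mulVec, smul_mulVec, smul_mulVec, one_mulVec,
    mul_neg, neg_smul, ← sub_eq_add_neg]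

theorem expectation_exp_neg_I_mul_half_smul {P : Matrix m m ℂ} (hP : P * P = 1)
    (A : Matrix m m ℂ) (ψ : m → ℂ) (t : ℝ) :
    let φ := NormedSpace.exp ((-(Complex.I * (t : ℂ) / 2)) • P) *ᵥ ψ
    star φ ⬝ᵥ A *ᵥ φ
      = (star ψ ⬝ᵥ A *ᵥ ψ + star (P *ᵥ ψ) ⬝ᵥ A *ᵥ (P *ᵥ ψ)) / 2
        + cos t • ((star ψ ⬝ᵥ A *ᵥ ψ - star (P *ᵥ ψ) ⬝ᵥ A *ᵥ (P *ᵥ ψ)) / 2)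
        + sin t • (Complex.I * (star (P *ᵥ ψ) ⬝ᵥ A *ᵥ ψ - star ψ ⬝ᵥ A *ᵥ (P *ᵥ ψ)) / 2) := by
  dsimp only
  rw [exp_neg_I_mul_half_smul_mulVec hP, star_dotProduct_mulVec_cos_sub_I_sin]
  have hcos : cos t = cos (t / 2) ^ 2 - sin (t / 2) ^ 2 := by
    rw [← cos_two_mul', mul_div_cancel₀ t two_ne_zero]
  have hsin : sin t = 2 * sin (t / 2) * cos (t / 2) := by
    rw [← sin_two_mul, mul_div_cancel₀ t two_ne_zero]
  have hpyth : (sin (t / 2) : ℂ) ^ 2 + (cos (t / 2) : ℂ) ^ 2 = 1 := by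
    exact_mod_cast sin_sq_add_cos_sq (t / 2)
  simp only [Complex.real_smul, hcos, hsin, Complex.ofReal_sub, Complex.ofReal_mul,
    Complex.ofReal_pow, Complex.ofReal_ofNat]
  linear_combination (star ψ ⬝ᵥ A *ᵥ ψ + star (P *ᵥ ψ) ⬝ᵥ A *ᵥ (P *ᵥ ψ)) / 2 * hpyth

end Rotation

theorem parameter_shift_rule_general
    {n : ℕ} (P A : Matrix (Fin n) (Fin n) ℂ)
    (hP : P * P = 1) (ψ : Fin n → ℂ)
    (f : ℝ → ℂ)
    (hf : ∀ θ : ℝ, f θ =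
      star ((NormedSpace.exp ((-(Complex.I * (θ : ℂ) / 2)) • P)).mulVec ψ) ⬝ᵥ
        (A.mulVec ((NormedSpace.exp ((-(Complex.I * (θ : ℂ) / 2)) • P)).mulVec ψ)))
    (θ : ℝ) :
    HasDerivAt f ((f (θ + π / 2) - f (θ - π / 2)) / 2) θ := by
  have hsinusoid := fun t => (hf t).trans (expectation_exp_neg_I_mul_half_smul hP A ψ t)
  simpa [Complex.real_smul, div_eq_inv_mul] using
    hasDerivAt_shift_of_eq_add_cos_smul_add_sin_smul hsinusoid θ

/-- **Parameter shift rule.** For a Hermitian involution `P` (`P² = 1`), an observable `A`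
and a state `ψ ∈ ℂⁿ`, the expectation
`f θ = ⟨exp (−(i·θ/2)·P) ψ, A · exp (−(i·θ/2)·P) ψ⟩` is differentiable in `θ` and its
derivative is obtained from two evaluations at shifted angles:
`f′(θ) = (f (θ + π/2) − f (θ − π/2))/2`. -/
theorem parameter_shift_rule
    {n : ℕ} (P A : Matrix (Fin n) (Fin n) ℂ)
    (hHerm : P.IsHermitian) (hP : P * P = 1) (ψ : Fin n → ℂ)
    (f : ℝ → ℂ)
    (hf : ∀ θ : ℝ, f θ =
      star ((NormedSpace.exp ((-(Complex.I * (θ : ℂ) / 2)) • P)).mulVec ψ) ⬝ᵥ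
        (A.mulVec ((NormedSpace.exp ((-(Complex.I * (θ : ℂ) / 2)) • P)).mulVec ψ)))
    (θ : ℝ) :
    HasDerivAt f ((f (θ + π / 2) - f (θ - π / 2)) / 2) θ :=
  parameter_shift_rule_general P A hP ψ f hf θ
end
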